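/- arXiv:1710.05232 — 17 statements merged into one kernel-verified Lean document; each statement's English description precedes it below -/
import Mathlib

section
/- If (A, V, R, S, ω) is a curved O-operator system associated to an extended A-bimodule algebra (V, ∘, ▷, ◁) with ω = ∘, then the operations x≻a = R(x)a, a≺x = aS(x), x⋗y = R(x)▷y, x⋖y = x◁S(y) + x∘y make (A, V, ≺, ≻, ⋖, ⋗) into a dendriform system. -/
/-!
Writing `▷`, `◁`, `∘` as `tr`, `tl`, `circ`, every identity is a direct expansion using
associativity, the bimodule axioms and the O-operator identities for `R` and `S`. The one with
content is `(x ⋖ y) ⋖ z = x ⋖ (y ⋗ z + y ⋖ z)`: the identity for `S` turns `x ◁ (S y S z)` into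
`x ◁ S (R y ▷ z + y ◁ S z + y ∘ z)`, and the remaining terms `(x ∘ y) ◁ S z`, `(x ◁ S y) ∘ z`,
`(x ∘ y) ∘ z` match `x ∘ (y ⋗ z + y ⋖ z)` term by term through the extended bimodule algebra
axioms and associativity of `∘`. This is why the curvature has to be `∘`.
-/

namespace CurvedOOperatorSystem

variable {K A V : Type*} [CommSemiring K] [Semiring A] [Module K A]
  [AddCommMonoid V] [Module K V]
  {tr : A →ₗ[K] V →ₗ[K] V} {tl : V →ₗ[K] A →ₗ[K] V} {circ : V →ₗ[K] V →ₗ[K] V}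
  {R S : V →ₗ[K] A}

theorem prec_prec (hS : ∀ x y : V, S x * S y = S (tr (R x) y + tl x (S y) + circ x y))
    (a : A) (x y : V) :
    a * S x * S y = a * S (tr (R x) y + (tl x (S y) + circ x y)) := by
  rw [mul_assoc, hS, add_assoc]

theorem succ_succ (hR : ∀ x y : V, R x * R y = R (tr (R x) y + tl x (S y) + circ x y))
    (a : A) (x y : V) :
    R x * (R y * a) = R (tr (R x) y + (tl x (S y) + circ x y)) * a := by
  rw [← mul_assoc, hR, add_assoc]

theorem lessdot_lessdot (hb2 : ∀ (x : V) (a b : A), tl (tl x a) b = tl x (a * b))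
    (hcassoc : ∀ x y z : V, circ (circ x y) z = circ x (circ y z))
    (he2 : ∀ x y z : V, tl (circ x y) (S z) = circ x (tl y (S z)))
    (he3 : ∀ x y z : V, circ x (tr (R y) z) = circ (tl x (S y)) z)
    (hS : ∀ x y : V, S x * S y = S (tr (R x) y + tl x (S y) + circ x y)) (x y z : V) :
    tl (tl x (S y) + circ x y) (S z) + circ (tl x (S y) + circ x y) z
      = tl x (S (tr (R y) z + (tl y (S z) + circ y z)))
        + circ x (tr (R y) z + (tl y (S z) + circ y z)) := by
  simp only [map_add, LinearMap.add_apply]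
  rw [hb2, hS, he2, he3, hcassoc]
  simp only [map_add]
  abel

theorem gtrdot_lessdot (hb3 : ∀ (a : A) (x : V) (b : A), tl (tr a x) b = tr a (tl x b))
    (he1 : ∀ x y z : V, tr (R x) (circ y z) = circ (tr (R x) y) z) (x y z : V) :
    tr (R x) (tl y (S z) + circ y z) = tl (tr (R x) y) (S z) + circ (tr (R x) y) z := by
  rw [map_add, hb3, he1]

theorem gtrdot_gtrdot (hb1 : ∀ (a b : A) (x : V), tr a (tr b x) = tr (a * b) x)
    (hR : ∀ x y : V, R x * R y = R (tr (R x) y + tl x (S y) + circ x y)) (x y z : V) :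
    tr (R x) (tr (R y) z) = tr (R (tr (R x) y + (tl x (S y) + circ x y))) z := by
  rw [hb1, hR, add_assoc]

end CurvedOOperatorSystem

/-- A : associative algebra, (V, ▷=tr, ◁=tl) an A-bimodule,
(V, circ, tr, tl) an extended A-bimodule algebra w.r.t. R, S,
and (A, V, R, S, circ) a curved O-operator system. -/
theorem curved_O_operator_system_gives_dendriform_system
{K A V : Type*} [Field K] [Ring A] [Algebra K A]
    [AddCommGroup V] [Module K V]
    (tr : A →ₗ[K] V →ₗ[K] V) (tl : V →ₗ[K] A →ₗ[K] V)
    (hb1 : ∀ (a b : A) (x : V), tr a (tr b x) = tr (a * b) x)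
    (hb2 : ∀ (x : V) (a b : A), tl (tl x a) b = tl x (a * b))
    (hb3 : ∀ (a : A) (x : V) (b : A), tl (tr a x) b = tr a (tl x b))
    (circ : V →ₗ[K] V →ₗ[K] V)
    (hcassoc : ∀ x y z : V, circ (circ x y) z = circ x (circ y z))
    (R S : V →ₗ[K] A)
    (he1 : ∀ x y z : V, tr (R x) (circ y z) = circ (tr (R x) y) z)
    (he2 : ∀ x y z : V, tl (circ x y) (S z) = circ x (tl y (S z)))
    (he3 : ∀ x y z : V, circ x (tr (R y) z) = circ (tl x (S y)) z)
    (hR : ∀ x y : V, R x * R y = R (tr (R x) y + tl x (S y) + circ x y))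
    (hS : ∀ x y : V, S x * S y = S (tr (R x) y + tl x (S y) + circ x y)) :
    ∀ (a : A) (x y z : V),
      -- (a ≺ x) ≺ y = a ≺ (x ⋗ y + x ⋖ y)
      ((a * S x) * S y = a * S (tr (R x) y + (tl x (S y) + circ x y))) ∧
      -- x ≻ (a ≺ y) = (x ≻ a) ≺ y
      (R x * (a * S y) = (R x * a) * S y) ∧
      -- x ≻ (y ≻ a) = (x ⋗ y + x ⋖ y) ≻ a
      (R x * (R y * a) = R (tr (R x) y + (tl x (S y) + circ x y)) * a) ∧
      -- (x ⋖ y) ⋖ z = x ⋖ (y ⋗ z + y ⋖ z)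
      (tl (tl x (S y) + circ x y) (S z) + circ (tl x (S y) + circ x y) z
        = tl x (S (tr (R y) z + (tl y (S z) + circ y z)))
          + circ x (tr (R y) z + (tl y (S z) + circ y z))) ∧
      -- x ⋗ (y ⋖ z) = (x ⋗ y) ⋖ z
      (tr (R x) (tl y (S z) + circ y z)
        = tl (tr (R x) y) (S z) + circ (tr (R x) y) z) ∧
      -- x ⋗ (y ⋗ z) = (x ⋗ y + x ⋖ y) ⋗ z
      (tr (R x) (tr (R y) z)
        = tr (R (tr (R x) y + (tl x (S y) + circ x y))) z) := fun a x y z =>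
  ⟨CurvedOOperatorSystem.prec_prec hS a x y, (mul_assoc _ _ _).symm,
    CurvedOOperatorSystem.succ_succ hR a x y,
    CurvedOOperatorSystem.lessdot_lessdot hb2 hcassoc he2 he3 hS x y z,
    CurvedOOperatorSystem.gtrdot_lessdot hb3 he1 x y z,
    CurvedOOperatorSystem.gtrdot_gtrdot hb1 hR x y z⟩
end

section
/- If (A, V, R, S, ω) is a curved O-operator system associated to an extended A-bimodule algebra (V, ∘, ▷, ◁) with ω = ∘, then the operations x≻a = R(x)a, a≺x = aS(x), x⋗y = R(x)▷y, x⋖y = x◁S(y), x·y = x∘y make (A, V, ≺, ≻, ⋖, ⋗, ·) into a tridendriform system. -/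
/-- `tr`, `tl` and `circ` are the actions ▷, ◁ and the product ∘ of the extended A-bimodule
algebra V. -/
theorem curved_O_operator_system_gives_tridendriform_system
{K A V : Type*} [Field K] [Ring A] [Algebra K A]
    [AddCommGroup V] [Module K V]
    (tr : A →ₗ[K] V →ₗ[K] V) (tl : V →ₗ[K] A →ₗ[K] V)
    (hb1 : ∀ (a b : A) (x : V), tr a (tr b x) = tr (a * b) x)
    (hb2 : ∀ (x : V) (a b : A), tl (tl x a) b = tl x (a * b))
    (hb3 : ∀ (a : A) (x : V) (b : A), tl (tr a x) b = tr a (tl x b))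
    (circ : V →ₗ[K] V →ₗ[K] V)
    (hcassoc : ∀ x y z : V, circ (circ x y) z = circ x (circ y z))
    (R S : V →ₗ[K] A)
    (he1 : ∀ x y z : V, tr (R x) (circ y z) = circ (tr (R x) y) z)
    (he2 : ∀ x y z : V, tl (circ x y) (S z) = circ x (tl y (S z)))
    (he3 : ∀ x y z : V, circ x (tr (R y) z) = circ (tl x (S y)) z)
    (hR : ∀ x y : V, R x * R y = R (tr (R x) y + tl x (S y) + circ x y))
    (hS : ∀ x y : V, S x * S y = S (tr (R x) y + tl x (S y) + circ x y)) :
    ∀ (a : A) (x y z : V),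
      -- (a ≺ x) ≺ y = a ≺ (x ⋖ y + x ⋗ y + x · y)
      ((a * S x) * S y = a * S (tl x (S y) + tr (R x) y + circ x y)) ∧
      -- x ≻ (a ≺ y) = (x ≻ a) ≺ y
      (R x * (a * S y) = (R x * a) * S y) ∧
      -- x ≻ (y ≻ a) = (x ⋖ y + x ⋗ y + x · y) ≻ a
      (R x * (R y * a) = R (tl x (S y) + tr (R x) y + circ x y) * a) ∧
      -- (x ⋖ y) ⋖ z = x ⋖ (y ⋖ z + y ⋗ z + y · z)
      (tl (tl x (S y)) (S z) = tl x (S (tl y (S z) + tr (R y) z + circ y z))) ∧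
      -- x ⋗ (y ⋖ z) = (x ⋗ y) ⋖ z
      (tr (R x) (tl y (S z)) = tl (tr (R x) y) (S z)) ∧
      -- x ⋗ (y ⋗ z) = (x ⋖ y + x ⋗ y + x · y) ⋗ z
      (tr (R x) (tr (R y) z) = tr (R (tl x (S y) + tr (R x) y + circ x y)) z) ∧
      -- (x ⋖ y) · z = x · (y ⋗ z)
      (circ (tl x (S y)) z = circ x (tr (R y) z)) ∧
      -- (x ⋗ y) · z = x ⋗ (y · z)
      (circ (tr (R x) y) z = tr (R x) (circ y z)) ∧
      -- (x · y) ⋖ z = x · (y ⋖ z)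
      (tl (circ x y) (S z) = circ x (tl y (S z))) ∧
      -- (x · y) · z = x · (y · z)
      (circ (circ x y) z = circ x (circ y z)) := by
  intro a x y z
  have hR' : ∀ x y : V, R x * R y = R (tl x (S y) + tr (R x) y + circ x y) := fun x y => by
    rw [hR, add_comm (tr _ _)]
  have hS' : ∀ x y : V, S x * S y = S (tl x (S y) + tr (R x) y + circ x y) := fun x y => by
    rw [hS, add_comm (tr _ _)]
  exact ⟨by rw [mul_assoc, hS'], (mul_assoc _ _ _).symm, by rw [← mul_assoc, hR'],
    by rw [hb2, hS'], (hb3 _ _ _).symm, by rw [hb1, hR'], (he3 x y z).symm, (he1 x y z).symm,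
    he2 x y z, hcassoc x y z⟩
end

section
/- Let A be an algebra, (V, ∘, ▷, ◁) an extended A-bimodule algebra, and R, S: V→A linear maps. Define x⋆y = R(x)▷y + x◁S(y) + x∘y. Then (V, ⋆) is an associative algebra if and only if for all x,y,z∈V: (R(x)R(y) − R(x⋆y))▷z = x◁(S(y)S(z) − S(y⋆z)). -/
/-!
Expanding both iterated products, the bimodule axioms, the three extended compatibility
conditions and the associativity of `∘` match every term of `(x ⋆ y) ⋆ z` with one of
`x ⋆ (y ⋆ z)`, except for `R(x ⋆ y) ▷ z + x ◁ S(y)S(z)` on the left and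
`R(x)R(y) ▷ z + x ◁ S(y ⋆ z)` on the right. So the associator of `⋆` is
`x ◁ (S(y)S(z) − S(y ⋆ z)) − (R(x)R(y) − R(x ⋆ y)) ▷ z`.
-/

section ExtendedBimoduleAlgebra

variable {K A V : Type*} [CommSemiring K] [Ring A] [Module K A] [AddCommGroup V] [Module K V]

structure IsBimodule (tr : A →ₗ[K] V →ₗ[K] V) (tl : V →ₗ[K] A →ₗ[K] V) : Prop where
  tr_tr : ∀ (a b : A) (x : V), tr a (tr b x) = tr (a * b) x
  tl_tl : ∀ (x : V) (a b : A), tl (tl x a) b = tl x (a * b)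
  tl_tr : ∀ (a : A) (x : V) (b : A), tl (tr a x) b = tr a (tl x b)

structure IsExtendedBimoduleAlgebra (tr : A →ₗ[K] V →ₗ[K] V) (tl : V →ₗ[K] A →ₗ[K] V)
    (circ : V →ₗ[K] V →ₗ[K] V) (R S : V →ₗ[K] A) : Prop extends IsBimodule tr tl where
  circ_assoc : ∀ x y z : V, circ (circ x y) z = circ x (circ y z)
  tr_circ : ∀ x y z : V, tr (R x) (circ y z) = circ (tr (R x) y) z
  tl_circ : ∀ x y z : V, tl (circ x y) (S z) = circ x (tl y (S z))
  circ_tr : ∀ x y z : V, circ x (tr (R y) z) = circ (tl x (S y)) z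

variable (tr : A →ₗ[K] V →ₗ[K] V) (tl : V →ₗ[K] A →ₗ[K] V) (circ : V →ₗ[K] V →ₗ[K] V)
  (R S : V →ₗ[K] A)

def starProd (x y : V) : V := tr (R x) y + tl x (S y) + circ x y

variable {tr tl circ R S}

theorem starProd_starProd_left (h : IsExtendedBimoduleAlgebra tr tl circ R S) (x y z : V) :
    starProd tr tl circ R S (starProd tr tl circ R S x y) z =
      tr (R (starProd tr tl circ R S x y)) z + tl x (S y * S z)
        + tr (R x) (tl y (S z)) + circ x (tl y (S z))
        + tr (R x) (circ y z) + circ x (tr (R y) z) + circ x (circ y z) := by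
  simp only [starProd, map_add, LinearMap.add_apply, h.tl_tr, h.tl_tl, h.tl_circ,
    ← h.tr_circ, ← h.circ_tr, h.circ_assoc]
  abel

theorem starProd_starProd_right (h : IsBimodule tr tl) (x y z : V) :
    starProd tr tl circ R S x (starProd tr tl circ R S y z) =
      tr (R x * R y) z + tl x (S (starProd tr tl circ R S y z))
        + tr (R x) (tl y (S z)) + circ x (tl y (S z))
        + tr (R x) (circ y z) + circ x (tr (R y) z) + circ x (circ y z) := by
  simp only [starProd, map_add, h.tr_tr]
  abel

theorem starProd_assoc_sub (h : IsExtendedBimoduleAlgebra tr tl circ R S) (x y z : V) :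
    starProd tr tl circ R S (starProd tr tl circ R S x y) z
        - starProd tr tl circ R S x (starProd tr tl circ R S y z) =
      tl x (S y * S z - S (starProd tr tl circ R S y z))
        - tr (R x * R y - R (starProd tr tl circ R S x y)) z := by
  rw [starProd_starProd_left h, starProd_starProd_right h.toIsBimodule]
  simp only [map_sub, LinearMap.sub_apply]
  abel

theorem starProd_assoc_iff (h : IsExtendedBimoduleAlgebra tr tl circ R S) :
    (∀ x y z : V, starProd tr tl circ R S (starProd tr tl circ R S x y) z =
        starProd tr tl circ R S x (starProd tr tl circ R S y z)) ↔
      ∀ x y z : V, tr (R x * R y - R (starProd tr tl circ R S x y)) z =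
        tl x (S y * S z - S (starProd tr tl circ R S y z)) := by
  refine forall₃_congr fun x y z => ?_
  rw [← sub_eq_zero, starProd_assoc_sub h, sub_eq_zero, eq_comm]

end ExtendedBimoduleAlgebra

/-- Associativity criterion for ⋆ on an extended A-bimodule algebra. -/
theorem star_assoc_iff_extended
{K A V : Type*} [Field K] [Ring A] [Algebra K A]
    [AddCommGroup V] [Module K V]
    (tr : A →ₗ[K] V →ₗ[K] V) (tl : V →ₗ[K] A →ₗ[K] V)
    (hb1 : ∀ (a b : A) (x : V), tr a (tr b x) = tr (a * b) x)
    (hb2 : ∀ (x : V) (a b : A), tl (tl x a) b = tl x (a * b))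
    (hb3 : ∀ (a : A) (x : V) (b : A), tl (tr a x) b = tr a (tl x b))
    (circ : V →ₗ[K] V →ₗ[K] V)
    (hcassoc : ∀ x y z : V, circ (circ x y) z = circ x (circ y z))
    (R S : V →ₗ[K] A)
    (he1 : ∀ x y z : V, tr (R x) (circ y z) = circ (tr (R x) y) z)
    (he2 : ∀ x y z : V, tl (circ x y) (S z) = circ x (tl y (S z)))
    (he3 : ∀ x y z : V, circ x (tr (R y) z) = circ (tl x (S y)) z)
    (star : V → V → V)
    (hstar : ∀ x y : V, star x y = tr (R x) y + tl x (S y) + circ x y) :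
    (∀ x y z : V, star (star x y) z = star x (star y z)) ↔
      (∀ x y z : V,
        tr (R x * R y - R (star x y)) z = tl x (S y * S z - S (star y z))) := by
  obtain rfl : star = starProd tr tl circ R S := funext₂ hstar
  exact starProd_assoc_iff ⟨⟨hb1, hb2, hb3⟩, hcassoc, he1, he2, he3⟩
end

section
/- If (A, V, R, S, ∘) is a curved O-operator system associated to (V,▷,◁) where (V, ∘, ▷, ◁) is an extended A-bimodule algebra, then (V, ⋆) with x⋆y = R(x)▷y + x◁S(y) + x∘y is an associative algebra. -/
/-!
Both `(x ⋆ y) ⋆ z` and `x ⋆ (y ⋆ z)` expand to the same seven terms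
`Rx ▷ (Ry ▷ z) + Rx ▷ (y ◁ Sz) + Rx ▷ (y ∘ z) + x ◁ (Sy Sz) + x ∘ (Ry ▷ z) + x ∘ (y ◁ Sz) + x ∘ (y ∘ z)`.
On the left, `R (x ⋆ y) = Rx Ry` and the bimodule and extended-algebra compatibilities re-bracket
each term; on the right, only `S (y ⋆ z) = Sy Sz` is needed.
-/

section CurvedStar

variable {K A V : Type*} [CommSemiring K] [Semiring A] [Module K A]
  [AddCommMonoid V] [Module K V]
  (tr : A →ₗ[K] V →ₗ[K] V) (tl : V →ₗ[K] A →ₗ[K] V) (circ : V →ₗ[K] V →ₗ[K] V)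
  (R S : V →ₗ[K] A)

def curvedStar (x y : V) : V :=
  tr (R x) y + tl x (S y) + circ x y

local notation:70 x:70 " ⋆ " y:71 => curvedStar tr tl circ R S x y

variable {tr tl circ R S}

lemma tr_curvedStar_left
    (hb1 : ∀ (a b : A) (x : V), tr a (tr b x) = tr (a * b) x)
    (hR : ∀ x y : V, R x * R y = R (tr (R x) y + tl x (S y) + circ x y)) (x y z : V) :
    tr (R (x ⋆ y)) z = tr (R x) (tr (R y) z) := by
  rw [curvedStar, ← hR, hb1]

lemma tl_curvedStar_left
    (hb2 : ∀ (x : V) (a b : A), tl (tl x a) b = tl x (a * b))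
    (hb3 : ∀ (a : A) (x : V) (b : A), tl (tr a x) b = tr a (tl x b))
    (he2 : ∀ x y z : V, tl (circ x y) (S z) = circ x (tl y (S z))) (x y z : V) :
    tl (x ⋆ y) (S z) = tr (R x) (tl y (S z)) + tl x (S y * S z) + circ x (tl y (S z)) := by
  rw [curvedStar, map_add, map_add, LinearMap.add_apply, LinearMap.add_apply, hb3, hb2, he2]

lemma circ_curvedStar_left
    (hcassoc : ∀ x y z : V, circ (circ x y) z = circ x (circ y z))
    (he1 : ∀ x y z : V, tr (R x) (circ y z) = circ (tr (R x) y) z)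
    (he3 : ∀ x y z : V, circ x (tr (R y) z) = circ (tl x (S y)) z) (x y z : V) :
    circ (x ⋆ y) z = tr (R x) (circ y z) + circ x (tr (R y) z) + circ x (circ y z) := by
  rw [curvedStar, map_add, map_add, LinearMap.add_apply, LinearMap.add_apply, he1, he3, hcassoc]

theorem curvedStar_assoc
    (hb1 : ∀ (a b : A) (x : V), tr a (tr b x) = tr (a * b) x)
    (hb2 : ∀ (x : V) (a b : A), tl (tl x a) b = tl x (a * b))
    (hb3 : ∀ (a : A) (x : V) (b : A), tl (tr a x) b = tr a (tl x b))
    (hcassoc : ∀ x y z : V, circ (circ x y) z = circ x (circ y z))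
    (he1 : ∀ x y z : V, tr (R x) (circ y z) = circ (tr (R x) y) z)
    (he2 : ∀ x y z : V, tl (circ x y) (S z) = circ x (tl y (S z)))
    (he3 : ∀ x y z : V, circ x (tr (R y) z) = circ (tl x (S y)) z)
    (hR : ∀ x y : V, R x * R y = R (tr (R x) y + tl x (S y) + circ x y))
    (hS : ∀ x y : V, S x * S y = S (tr (R x) y + tl x (S y) + circ x y)) (x y z : V) :
    (x ⋆ y) ⋆ z = x ⋆ (y ⋆ z) := by
  conv_lhs => rw [curvedStar]
  rw [tr_curvedStar_left hb1 hR, tl_curvedStar_left hb2 hb3 he2,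
    circ_curvedStar_left hcassoc he1 he3]
  simp only [curvedStar, ← hS, map_add]
  abel

end CurvedStar

/-- A : associative algebra, (V, ▷=tr, ◁=tl) an A-bimodule,
(V, circ, tr, tl) an extended A-bimodule algebra w.r.t. R, S,
and (A, V, R, S, circ) a curved O-operator system. -/
theorem curved_O_operator_system_star_associative
{K A V : Type*} [Field K] [Ring A] [Algebra K A]
    [AddCommGroup V] [Module K V]
    (tr : A →ₗ[K] V →ₗ[K] V) (tl : V →ₗ[K] A →ₗ[K] V)
    (hb1 : ∀ (a b : A) (x : V), tr a (tr b x) = tr (a * b) x)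
    (hb2 : ∀ (x : V) (a b : A), tl (tl x a) b = tl x (a * b))
    (hb3 : ∀ (a : A) (x : V) (b : A), tl (tr a x) b = tr a (tl x b))
    (circ : V →ₗ[K] V →ₗ[K] V)
    (hcassoc : ∀ x y z : V, circ (circ x y) z = circ x (circ y z))
    (R S : V →ₗ[K] A)
    (he1 : ∀ x y z : V, tr (R x) (circ y z) = circ (tr (R x) y) z)
    (he2 : ∀ x y z : V, tl (circ x y) (S z) = circ x (tl y (S z)))
    (he3 : ∀ x y z : V, circ x (tr (R y) z) = circ (tl x (S y)) z)
    (hR : ∀ x y : V, R x * R y = R (tr (R x) y + tl x (S y) + circ x y))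
    (hS : ∀ x y : V, S x * S y = S (tr (R x) y + tl x (S y) + circ x y))
    (star : V → V → V)
    (hstar : ∀ x y : V, star x y = tr (R x) y + tl x (S y) + circ x y) :
    ∀ x y z : V, star (star x y) z = star x (star y z) := by
  obtain rfl : star = curvedStar tr tl circ R S := funext₂ hstar
  exact curvedStar_assoc hb1 hb2 hb3 hcassoc he1 he2 he3 hR hS
end

section
/- Let A be an algebra, (V, ∘, ▷, ◁) an A-bimodule algebra, and R: V→A linear. The operation x⋆y = R(x)▷y + x◁R(y) + x∘y is associative if and only if (R(x)R(y) − R(x⋆y))▷z = x◁(R(y)R(z) − R(y⋆z)) for all x,y,z∈V. -/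
section BimoduleAlgebra

variable {K A V : Type*} [CommSemiring K] [Ring A] [Algebra K A] [AddCommGroup V] [Module K V]
  {tr : A →ₗ[K] V →ₗ[K] V} {tl : V →ₗ[K] A →ₗ[K] V} {circ : V →ₗ[K] V →ₗ[K] V}
  {R : V →ₗ[K] A} {star : V → V → V}

/-- Both sides expand to the same seven terms
`R x R y ▷ z + R x ▷ (y ◁ R z) + x ◁ R y R z + (R x ▷ y) ∘ z + (x ◁ R y) ∘ z + x ∘ (y ◁ R z) + x ∘ y ∘ z`,
so the associator of `⋆` is exactly the difference of the two defect terms. -/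
theorem star_star_add_tr_eq_star_star_add_tl
    (hb1 : ∀ (a b : A) (x : V), tr a (tr b x) = tr (a * b) x)
    (hb2 : ∀ (x : V) (a b : A), tl (tl x a) b = tl x (a * b))
    (hb3 : ∀ (a : A) (x : V) (b : A), tl (tr a x) b = tr a (tl x b))
    (hcassoc : ∀ x y z : V, circ (circ x y) z = circ x (circ y z))
    (hba1 : ∀ (a : A) (x y : V), tr a (circ x y) = circ (tr a x) y)
    (hba2 : ∀ (x y : V) (a : A), tl (circ x y) a = circ x (tl y a))
    (hba3 : ∀ (x : V) (a : A) (y : V), circ x (tr a y) = circ (tl x a) y)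
    (hstar : ∀ x y : V, star x y = tr (R x) y + tl x (R y) + circ x y) (x y z : V) :
    star (star x y) z + tr (R x * R y - R (star x y)) z =
      star x (star y z) + tl x (R y * R z - R (star y z)) := by
  simp only [hstar, map_add, map_sub, LinearMap.add_apply, LinearMap.sub_apply,
    hb1, hb2, hb3, hcassoc, ← hba1, hba2, hba3]
  abel

end BimoduleAlgebra

/-- Associativity criterion for ⋆_R on an A-bimodule algebra. -/
theorem starR_assoc_iff
{K A V : Type*} [Field K] [Ring A] [Algebra K A]
    [AddCommGroup V] [Module K V]
    (tr : A →ₗ[K] V →ₗ[K] V) (tl : V →ₗ[K] A →ₗ[K] V)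
    (hb1 : ∀ (a b : A) (x : V), tr a (tr b x) = tr (a * b) x)
    (hb2 : ∀ (x : V) (a b : A), tl (tl x a) b = tl x (a * b))
    (hb3 : ∀ (a : A) (x : V) (b : A), tl (tr a x) b = tr a (tl x b))
    (circ : V →ₗ[K] V →ₗ[K] V)
    (hcassoc : ∀ x y z : V, circ (circ x y) z = circ x (circ y z))
(hba1 : ∀ (a : A) (x y : V), tr a (circ x y) = circ (tr a x) y)
    (hba2 : ∀ (x y : V) (a : A), tl (circ x y) a = circ x (tl y a))
    (hba3 : ∀ (x : V) (a : A) (y : V), circ x (tr a y) = circ (tl x a) y)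
    (R : V →ₗ[K] A)
    (star : V → V → V)
    (hstar : ∀ x y : V, star x y = tr (R x) y + tl x (R y) + circ x y) :
    (∀ x y z : V, star (star x y) z = star x (star y z)) ↔
      (∀ x y z : V,
        tr (R x * R y - R (star x y)) z = tl x (R y * R z - R (star y z))) := by
  refine forall₃_congr fun x y z => ?_
  have key := star_star_add_tr_eq_star_star_add_tl hb1 hb2 hb3 hcassoc hba1 hba2 hba3 hstar x y z
  constructor
  · intro hassoc
    rw [hassoc] at key
    exact add_left_cancel key
  · intro hdefect
    rw [hdefect] at key
    exact add_right_cancel key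
end

section
/- Let char K ≠ 2, A an algebra, (V, ∘, ▷, ◁) an A-bimodule algebra, R,S: V→A, and let α=(R+S)/2, β=(R−S)/2. If β is balanced of mass 1, i.e. β(x)▷y = x◁β(y) for all x,y, then (V,⋆) with x⋆y = R(x)▷y + x◁S(y) + x∘y is associative if and only if (α(x)α(y) − α(x⋆_α y))▷z = x◁(α(y)α(z) − α(y⋆_α z)) for all x,y,z, where x⋆_α y = α(x)▷y + x◁α(y) + x∘y. -/
/-!
Writing `R = α + β` and `S = α - β`, balancedness of `β` makes the `β`-contributions to
`R(x) ▷ y + x ◁ S(y)` cancel, so `⋆` is literally `⋆_α`. For any map `φ : V → A` the bimodule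
algebra axioms collapse the associator of `x ⋆_φ y = φ(x) ▷ y + x ◁ φ(y) + x ∘ y` to
`x ◁ (φ(y)φ(z) - φ(y ⋆_φ z)) - (φ(x)φ(y) - φ(x ⋆_φ y)) ▷ z`, whence the criterion.
-/

section BimoduleAlgebra

variable {K A V : Type*} [CommSemiring K] [Ring A] [Algebra K A] [AddCommGroup V] [Module K V]

structure IsBimoduleAlgebra (tr : A →ₗ[K] V →ₗ[K] V) (tl : V →ₗ[K] A →ₗ[K] V)
    (circ : V →ₗ[K] V →ₗ[K] V) : Prop where
  tr_tr : ∀ (a b : A) (x : V), tr a (tr b x) = tr (a * b) x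
  tl_tl : ∀ (x : V) (a b : A), tl (tl x a) b = tl x (a * b)
  tl_tr : ∀ (a : A) (x : V) (b : A), tl (tr a x) b = tr a (tl x b)
  circ_assoc : ∀ x y z : V, circ (circ x y) z = circ x (circ y z)
  tr_circ : ∀ (a : A) (x y : V), tr a (circ x y) = circ (tr a x) y
  tl_circ : ∀ (x y : V) (a : A), tl (circ x y) a = circ x (tl y a)
  circ_tr : ∀ (x : V) (a : A) (y : V), circ x (tr a y) = circ (tl x a) y

def deformedMul (tr : A →ₗ[K] V →ₗ[K] V) (tl : V →ₗ[K] A →ₗ[K] V)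
    (circ : V →ₗ[K] V →ₗ[K] V) (φ : V → A) (x y : V) : V :=
  tr (φ x) y + tl x (φ y) + circ x y

namespace IsBimoduleAlgebra

variable {tr : A →ₗ[K] V →ₗ[K] V} {tl : V →ₗ[K] A →ₗ[K] V} {circ : V →ₗ[K] V →ₗ[K] V}

theorem deformedMul_assoc_sub (h : IsBimoduleAlgebra tr tl circ) (φ : V → A) (x y z : V) :
    deformedMul tr tl circ φ (deformedMul tr tl circ φ x y) z -
        deformedMul tr tl circ φ x (deformedMul tr tl circ φ y z) =
      tl x (φ y * φ z - φ (deformedMul tr tl circ φ y z)) -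
        tr (φ x * φ y - φ (deformedMul tr tl circ φ x y)) z := by
  simp only [deformedMul, map_add, map_sub, LinearMap.add_apply, LinearMap.sub_apply,
    h.tr_tr, h.tl_tl, h.tl_tr, h.tr_circ, h.tl_circ, h.circ_tr, h.circ_assoc]
  abel

theorem deformedMul_assoc_iff (h : IsBimoduleAlgebra tr tl circ) (φ : V → A) :
    (∀ x y z : V, deformedMul tr tl circ φ (deformedMul tr tl circ φ x y) z =
        deformedMul tr tl circ φ x (deformedMul tr tl circ φ y z)) ↔
      ∀ x y z : V, tr (φ x * φ y - φ (deformedMul tr tl circ φ x y)) z =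
        tl x (φ y * φ z - φ (deformedMul tr tl circ φ y z)) := by
  refine forall₃_congr fun x y z => ?_
  rw [← sub_eq_zero, h.deformedMul_assoc_sub, sub_eq_zero, eq_comm]

end IsBimoduleAlgebra

theorem tr_add_tl_eq_of_balanced (tr : A →ₗ[K] V →ₗ[K] V) (tl : V →ₗ[K] A →ₗ[K] V)
    {R S α β : V →ₗ[K] A} (hR : R = α + β) (hS : S = α - β)
    (hbal : ∀ x y : V, tr (β x) y = tl x (β y)) (x y : V) :
    tr (R x) y + tl x (S y) = tr (α x) y + tl x (α y) := by
  simp only [hR, hS, LinearMap.add_apply, LinearMap.sub_apply, map_add, map_sub, hbal x y]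
  abel

end BimoduleAlgebra

section Halves

variable {k M : Type*} [DivisionRing k] [AddCommGroup M] [Module k M]

theorem inv_two_smul_add_add_inv_two_smul_sub (h2 : (2 : k) ≠ 0) (a b : M) :
    (2 : k)⁻¹ • (a + b) + (2 : k)⁻¹ • (a - b) = a := by
  rw [← smul_add, show a + b + (a - b) = (2 : k) • a by rw [two_smul]; abel, smul_smul,
    inv_mul_cancel₀ h2, one_smul]

theorem inv_two_smul_add_sub_inv_two_smul_sub (h2 : (2 : k) ≠ 0) (a b : M) :
    (2 : k)⁻¹ • (a + b) - (2 : k)⁻¹ • (a - b) = b := by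
  rw [← smul_sub, show a + b - (a - b) = (2 : k) • b by rw [two_smul]; abel, smul_smul,
    inv_mul_cancel₀ h2, one_smul]

end Halves

/-- Symmetrizer/antisymmetrizer criterion: if β = (R-S)/2 is balanced of mass 1
then ⋆ is associative iff α = (R+S)/2 satisfies the associativity criterion. -/
theorem star_assoc_iff_symmetrizer
{K A V : Type*} [Field K] [Ring A] [Algebra K A]
    [AddCommGroup V] [Module K V]
    (tr : A →ₗ[K] V →ₗ[K] V) (tl : V →ₗ[K] A →ₗ[K] V)
    (hb1 : ∀ (a b : A) (x : V), tr a (tr b x) = tr (a * b) x)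
    (hb2 : ∀ (x : V) (a b : A), tl (tl x a) b = tl x (a * b))
    (hb3 : ∀ (a : A) (x : V) (b : A), tl (tr a x) b = tr a (tl x b))
    (circ : V →ₗ[K] V →ₗ[K] V)
    (hcassoc : ∀ x y z : V, circ (circ x y) z = circ x (circ y z))
(hba1 : ∀ (a : A) (x y : V), tr a (circ x y) = circ (tr a x) y)
    (hba2 : ∀ (x y : V) (a : A), tl (circ x y) a = circ x (tl y a))
    (hba3 : ∀ (x : V) (a : A) (y : V), circ x (tr a y) = circ (tl x a) y)
    (hchar : (2 : K) ≠ 0)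
    (R S : V →ₗ[K] A)
    (α β : V →ₗ[K] A)
    (hα : α = (2 : K)⁻¹ • (R + S))
    (hβ : β = (2 : K)⁻¹ • (R - S))
    (hbal : ∀ x y : V, tr (β x) y = tl x (β y))
    (star starα : V → V → V)
    (hstar : ∀ x y : V, star x y = tr (R x) y + tl x (S y) + circ x y)
    (hstarα : ∀ x y : V, starα x y = tr (α x) y + tl x (α y) + circ x y) :
    (∀ x y z : V, star (star x y) z = star x (star y z)) ↔
      (∀ x y z : V,
        tr (α x * α y - α (starα x y)) z = tl x (α y * α z - α (starα y z))) := by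
  have hbim : IsBimoduleAlgebra tr tl circ :=
    ⟨hb1, hb2, hb3, hcassoc, hba1, hba2, hba3⟩
  have hR : R = α + β := by rw [hα, hβ, inv_two_smul_add_add_inv_two_smul_sub hchar]
  have hS : S = α - β := by rw [hα, hβ, inv_two_smul_add_sub_inv_two_smul_sub hchar]
  obtain rfl : starα = deformedMul tr tl circ α := funext₂ hstarα
  obtain rfl : star = deformedMul tr tl circ α := funext₂ fun x y => by
    rw [hstar, tr_add_tl_eq_of_balanced tr tl hR hS hbal]; rfl
  exact hbim.deformedMul_assoc_iff α
end

section
/- Let (A, V, R, S, ω) be a curved O-operator system associated to (V,▷,◁), and set ω₁ = R∘ω, ω₂ = S∘ω. Define x⋄y = R(x)▷y + x◁S(y). Then (V, ⋄) is an associative algebra if and only if ω₁(x⊗y)▷z = x◁ω₂(y⊗z) for all x,y,z∈V. -/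
/-!
Both sides of the associator involve `R (x ⋄ y)` and `S (y ⋄ z)`, and the defining identities of
the system rewrite these as `R x * R y - ω₁(x ⊗ y)` and `S y * S z - ω₂(y ⊗ z)`. After expanding
with the bimodule axioms every remaining term cancels, leaving
`(x ⋄ y) ⋄ z + ω₁(x ⊗ y) ▷ z = x ⋄ (y ⋄ z) + x ◁ ω₂(y ⊗ z)`.
-/

section CurvedOOperator

variable {K A V : Type*} [CommSemiring K] [Ring A] [Algebra K A] [AddCommGroup V] [Module K V]

def curvedProduct (tr : A →ₗ[K] V →ₗ[K] V) (tl : V →ₗ[K] A →ₗ[K] V) (R S : V →ₗ[K] A)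
    (x y : V) : V :=
  tr (R x) y + tl x (S y)

variable (tr : A →ₗ[K] V →ₗ[K] V) (tl : V →ₗ[K] A →ₗ[K] V) (R S : V →ₗ[K] A)
  (ω : V →ₗ[K] V →ₗ[K] V)

theorem map_curvedProduct_eq_mul_sub {T : V →ₗ[K] A}
    (hT : ∀ x y : V, T x * T y = T (curvedProduct tr tl R S x y + ω x y)) (x y : V) :
    T (curvedProduct tr tl R S x y) = T x * T y - T (ω x y) := by
  rw [hT, map_add, add_sub_cancel_right]

theorem curvedProduct_assoc_add_curvature
    (hb1 : ∀ (a b : A) (x : V), tr a (tr b x) = tr (a * b) x)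
    (hb2 : ∀ (x : V) (a b : A), tl (tl x a) b = tl x (a * b))
    (hb3 : ∀ (a : A) (x : V) (b : A), tl (tr a x) b = tr a (tl x b))
    (hR : ∀ x y : V, R x * R y = R (curvedProduct tr tl R S x y + ω x y))
    (hS : ∀ x y : V, S x * S y = S (curvedProduct tr tl R S x y + ω x y)) (x y z : V) :
    curvedProduct tr tl R S (curvedProduct tr tl R S x y) z + tr (R (ω x y)) z =
      curvedProduct tr tl R S x (curvedProduct tr tl R S y z) + tl x (S (ω y z)) := by
  have hRxy := map_curvedProduct_eq_mul_sub tr tl R S ω hR x y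
  have hSyz := map_curvedProduct_eq_mul_sub tr tl R S ω hS y z
  simp only [curvedProduct] at hRxy hSyz ⊢
  simp only [hRxy, hSyz, map_add, map_sub, LinearMap.add_apply, LinearMap.sub_apply, ← hb1, ← hb2,
    hb3]
  abel

end CurvedOOperator

/-- For a curved O-operator system, x⋄y = R(x)▷y + x◁S(y) is associative iff
ω₁(x⊗y)▷z = x◁ω₂(y⊗z), where ω₁ = R∘ω and ω₂ = S∘ω. -/
theorem diamond_assoc_iff_curvature
    {K A V : Type*} [Field K] [Ring A] [Algebra K A]
    [AddCommGroup V] [Module K V]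
    (tr : A →ₗ[K] V →ₗ[K] V) (tl : V →ₗ[K] A →ₗ[K] V)
    (hb1 : ∀ (a b : A) (x : V), tr a (tr b x) = tr (a * b) x)
    (hb2 : ∀ (x : V) (a b : A), tl (tl x a) b = tl x (a * b))
    (hb3 : ∀ (a : A) (x : V) (b : A), tl (tr a x) b = tr a (tl x b))
    (R S : V →ₗ[K] A) (ω : V →ₗ[K] V →ₗ[K] V)
    (hR : ∀ x y : V, R x * R y = R (tr (R x) y + tl x (S y) + ω x y))
    (hS : ∀ x y : V, S x * S y = S (tr (R x) y + tl x (S y) + ω x y))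
    (diamond : V → V → V)
    (hdiamond : ∀ x y : V, diamond x y = tr (R x) y + tl x (S y)) :
    (∀ x y z : V, diamond (diamond x y) z = diamond x (diamond y z)) ↔
      (∀ x y z : V, tr (R (ω x y)) z = tl x (S (ω y z))) := by
  obtain rfl : diamond = curvedProduct tr tl R S := funext₂ hdiamond
  refine forall₃_congr fun x y z => ?_
  have key := curvedProduct_assoc_add_curvature tr tl R S ω hb1 hb2 hb3 hR hS x y z
  exact ⟨fun h => add_left_cancel (h ▸ key), fun h => add_right_cancel (h ▸ key)⟩
end

section
/- Let A be an algebra, (V, ∘, ▷, ◁) an A-bimodule algebra, and R: V→A an O-operator of weight λ, i.e. R(x)R(y)=R(R(x)▷y + x◁R(y) + λ x∘y). Then the operation x⊙y = R(x)▷y + x◁R(y) is associative if and only if λ R(x∘y)▷z = λ x◁R(y∘z) for all x,y,z∈V. -/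
/-!
Applying `R` to the defining identity of an O-operator gives `R (x ⊙ y) = R x R y - λ R (x ∘ y)`.
Substituting this into both associators and using the three bimodule axioms, the terms built from
`R x R y` and `R y R z` match, leaving `(x ⊙ y) ⊙ z + λ R(x ∘ y) ▷ z = x ⊙ (y ⊙ z) + λ x ◁ R(y ∘ z)`.
-/

namespace OOperator

variable {K A V : Type*} [CommRing K] [Ring A] [Algebra K A] [AddCommGroup V] [Module K V]
  (tr : A →ₗ[K] V →ₗ[K] V) (tl : V →ₗ[K] A →ₗ[K] V) (circ : V →ₗ[K] V →ₗ[K] V)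
  (lam : K) (R : V →ₗ[K] A)

theorem map_tr_add_tl
    (hR : ∀ x y : V, R x * R y = R (tr (R x) y + tl x (R y) + lam • circ x y)) (x y : V) :
    R (tr (R x) y + tl x (R y)) = R x * R y - lam • R (circ x y) := by
  rw [hR x y, map_add R _ (lam • circ x y), map_smul, add_sub_cancel_right]

theorem odot_odot_add_smul_eq
    (hb1 : ∀ (a b : A) (x : V), tr a (tr b x) = tr (a * b) x)
    (hb2 : ∀ (x : V) (a b : A), tl (tl x a) b = tl x (a * b))
    (hb3 : ∀ (a : A) (x : V) (b : A), tl (tr a x) b = tr a (tl x b))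
    (hR : ∀ x y : V, R x * R y = R (tr (R x) y + tl x (R y) + lam • circ x y))
    (odot : V → V → V) (hodot : ∀ x y : V, odot x y = tr (R x) y + tl x (R y)) (x y z : V) :
    odot (odot x y) z + lam • tr (R (circ x y)) z
      = odot x (odot y z) + lam • tl x (R (circ y z)) := by
  simp only [hodot, map_tr_add_tl tr tl circ lam R hR, map_add, map_sub, map_smul,
    LinearMap.add_apply, LinearMap.sub_apply, LinearMap.smul_apply, hb1, hb2, hb3]
  abel

end OOperator

theorem odot_assoc_iff_general
{K A V : Type*} [Field K] [Ring A] [Algebra K A]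
    [AddCommGroup V] [Module K V]
    (tr : A →ₗ[K] V →ₗ[K] V) (tl : V →ₗ[K] A →ₗ[K] V)
    (hb1 : ∀ (a b : A) (x : V), tr a (tr b x) = tr (a * b) x)
    (hb2 : ∀ (x : V) (a b : A), tl (tl x a) b = tl x (a * b))
    (hb3 : ∀ (a : A) (x : V) (b : A), tl (tr a x) b = tr a (tl x b))
    (circ : V →ₗ[K] V →ₗ[K] V)
    (lam : K) (R : V →ₗ[K] A)
    (hR : ∀ x y : V, R x * R y = R (tr (R x) y + tl x (R y) + lam • circ x y))
    (odot : V → V → V)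
    (hodot : ∀ x y : V, odot x y = tr (R x) y + tl x (R y)) :
    (∀ x y z : V, odot (odot x y) z = odot x (odot y z)) ↔
      (∀ x y z : V, lam • tr (R (circ x y)) z = lam • tl x (R (circ y z))) :=
  forall₃_congr fun x y z => eq_iff_eq_of_add_eq_add <|
    OOperator.odot_odot_add_smul_eq tr tl circ lam R hb1 hb2 hb3 hR odot hodot x y z

/-- For an O-operator R of weight λ, x⊙y = R(x)▷y + x◁R(y) is associative iff
λ R(x∘y)▷z = λ x◁R(y∘z). -/
theorem odot_assoc_iff
{K A V : Type*} [Field K] [Ring A] [Algebra K A]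
    [AddCommGroup V] [Module K V]
    (tr : A →ₗ[K] V →ₗ[K] V) (tl : V →ₗ[K] A →ₗ[K] V)
    (hb1 : ∀ (a b : A) (x : V), tr a (tr b x) = tr (a * b) x)
    (hb2 : ∀ (x : V) (a b : A), tl (tl x a) b = tl x (a * b))
    (hb3 : ∀ (a : A) (x : V) (b : A), tl (tr a x) b = tr a (tl x b))
    (circ : V →ₗ[K] V →ₗ[K] V)
    (hcassoc : ∀ x y z : V, circ (circ x y) z = circ x (circ y z))
(hba1 : ∀ (a : A) (x y : V), tr a (circ x y) = circ (tr a x) y)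
    (hba2 : ∀ (x y : V) (a : A), tl (circ x y) a = circ x (tl y a))
    (hba3 : ∀ (x : V) (a : A) (y : V), circ x (tr a y) = circ (tl x a) y)
    (lam : K) (R : V →ₗ[K] A)
    (hR : ∀ x y : V, R x * R y = R (tr (R x) y + tl x (R y) + lam • circ x y))
    (odot : V → V → V)
    (hodot : ∀ x y : V, odot x y = tr (R x) y + tl x (R y)) :
    (∀ x y z : V, odot (odot x y) z = odot x (odot y z)) ↔
      (∀ x y z : V, lam • tr (R (circ x y)) z = lam • tl x (R (circ y z))) :=
  odot_assoc_iff_general tr tl hb1 hb2 hb3 circ lam R hR odot hodot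
end

section
/- If (A, V, R, S, ∘) is a curved O-operator system associated to (V,▷,◁) where (V, ∘, ▷, ◁) is an extended A-bimodule algebra, then (V, ♦) with x♦y = R(x)▷y − y◁S(x) + x∘y is a pre-Lie algebra, i.e. (x♦y)♦z − x♦(y♦z) = (y♦x)♦z − y♦(x♦z) for all x,y,z∈V. -/
/-!
Write `x ♦ y` for the product and `[x, y]♦ = x ♦ y - y ♦ x`. Expanding with the bimodule and
extended-algebra axioms, the difference of the two associators `(x, y, z)♦ - (y, x, z)♦` collapses to
`(R [x, y]♦ - [R x, R y]) ▷ z - z ◁ (S [x, y]♦ - [S x, S y])`. The curved O-operator identities for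
`R` and `S` say precisely that both brackets in this expression vanish, since `[x, y]♦` is the
commutator of the product `R(x) ▷ y + x ◁ S(y) + x ∘ y` appearing there.
-/

section CurvedOOperator

variable {K A V : Type*} [CommSemiring K] [Ring A] [Algebra K A] [AddCommGroup V] [Module K V]
  (tr : A →ₗ[K] V →ₗ[K] V) (tl : V →ₗ[K] A →ₗ[K] V) (circ : V →ₗ[K] V →ₗ[K] V) (R S : V →ₗ[K] A)

def diamond (x y : V) : V := tr (R x) y - tl y (S x) + circ x y

def oOperatorProduct (x y : V) : V := tr (R x) y + tl x (S y) + circ x y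

theorem diamond_sub_diamond_swap (x y : V) :
    diamond tr tl circ R S x y - diamond tr tl circ R S y x =
      oOperatorProduct tr tl circ R S x y - oOperatorProduct tr tl circ R S y x := by
  simp only [diamond, oOperatorProduct]
  abel

theorem commutator_eq_map_diamond_sub_diamond_swap (P : V →ₗ[K] A)
    (hP : ∀ x y : V, P x * P y = P (oOperatorProduct tr tl circ R S x y)) (x y : V) :
    P x * P y - P y * P x = P (diamond tr tl circ R S x y - diamond tr tl circ R S y x) := by
  rw [diamond_sub_diamond_swap, map_sub, hP, hP]

theorem diamond_associator_sub_associator_swap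
    (hb1 : ∀ (a b : A) (x : V), tr a (tr b x) = tr (a * b) x)
    (hb2 : ∀ (x : V) (a b : A), tl (tl x a) b = tl x (a * b))
    (hb3 : ∀ (a : A) (x : V) (b : A), tl (tr a x) b = tr a (tl x b))
    (hcassoc : ∀ x y z : V, circ (circ x y) z = circ x (circ y z))
    (he1 : ∀ x y z : V, tr (R x) (circ y z) = circ (tr (R x) y) z)
    (he2 : ∀ x y z : V, tl (circ x y) (S z) = circ x (tl y (S z)))
    (he3 : ∀ x y z : V, circ x (tr (R y) z) = circ (tl x (S y)) z) (x y z : V) :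
    let d := diamond tr tl circ R S
    (d (d x y) z - d x (d y z)) - (d (d y x) z - d y (d x z)) =
      tr (R (d x y - d y x) - (R x * R y - R y * R x)) z
        - tl z (S (d x y - d y x) - (S x * S y - S y * S x)) := by
  simp only [diamond, map_add, map_sub, LinearMap.add_apply, LinearMap.sub_apply,
    hb1, hb2, hb3, he1, he2, he3, hcassoc]
  abel

end CurvedOOperator

/-- A : associative algebra, (V, ▷=tr, ◁=tl) an A-bimodule,
(V, circ, tr, tl) an extended A-bimodule algebra w.r.t. R, S,
and (A, V, R, S, circ) a curved O-operator system. -/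
theorem curved_O_operator_system_gives_preLie
{K A V : Type*} [Field K] [Ring A] [Algebra K A]
    [AddCommGroup V] [Module K V]
    (tr : A →ₗ[K] V →ₗ[K] V) (tl : V →ₗ[K] A →ₗ[K] V)
    (hb1 : ∀ (a b : A) (x : V), tr a (tr b x) = tr (a * b) x)
    (hb2 : ∀ (x : V) (a b : A), tl (tl x a) b = tl x (a * b))
    (hb3 : ∀ (a : A) (x : V) (b : A), tl (tr a x) b = tr a (tl x b))
    (circ : V →ₗ[K] V →ₗ[K] V)
    (hcassoc : ∀ x y z : V, circ (circ x y) z = circ x (circ y z))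
    (R S : V →ₗ[K] A)
    (he1 : ∀ x y z : V, tr (R x) (circ y z) = circ (tr (R x) y) z)
    (he2 : ∀ x y z : V, tl (circ x y) (S z) = circ x (tl y (S z)))
    (he3 : ∀ x y z : V, circ x (tr (R y) z) = circ (tl x (S y)) z)
    (hR : ∀ x y : V, R x * R y = R (tr (R x) y + tl x (S y) + circ x y))
    (hS : ∀ x y : V, S x * S y = S (tr (R x) y + tl x (S y) + circ x y))
    (lozenge : V → V → V)
    (hloz : ∀ x y : V, lozenge x y = tr (R x) y - tl y (S x) + circ x y) :
    ∀ x y z : V,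
      lozenge (lozenge x y) z - lozenge x (lozenge y z)
        = lozenge (lozenge y x) z - lozenge y (lozenge x z) := by
  obtain rfl : lozenge = diamond tr tl circ R S := funext fun x => funext (hloz x)
  intro x y z
  rw [← sub_eq_zero, diamond_associator_sub_associator_swap tr tl circ R S hb1 hb2 hb3 hcassoc
    he1 he2 he3, ← commutator_eq_map_diamond_sub_diamond_swap tr tl circ R S R hR,
    ← commutator_eq_map_diamond_sub_diamond_swap tr tl circ R S S hS, sub_self, sub_self]
  simp
end

section
/- Let (V, μ, ν, R) be a generalized Rota-Baxter algebra such that (μ, ν) is an associative compatible pair on V (write μ(x⊗y)=xy, ν(x⊗y)=x⋄y). Then defining x≺y = xR(y) + x⋄y and x≻y = R(x)y makes (V, ≺, ≻) a dendriform algebra: (x≺y)≺z = x≺(y≺z + y≻z), (x≻y)≺z = x≻(y≺z), x≻(y≻z) = (x≺y + x≻y)≻z. -/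
/-! The generalized Rota-Baxter identity says exactly that `R (x ≺ y + x ≻ y) = R(x) R(y)`.
With it, each dendriform axiom reduces, after expanding by bilinearity, to associativity of
`·` and `⋄` and the compatibility relations between them. -/

namespace GeneralizedRotaBaxter

variable {K V : Type*} [CommSemiring K] [AddCommMonoid V] [Module K V]
  (m d : V →ₗ[K] V →ₗ[K] V) (R : V →ₗ[K] V)

/-- `x ≺ y = x R(y) + x ⋄ y`. -/
def prec (x y : V) : V := m x (R y) + d x y

/-- `x ≻ y = R(x) y`. -/
def succ (x y : V) : V := m (R x) y

variable {m d R}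

theorem apply_prec_add_succ
    (hRB : ∀ x y : V, m (R x) (R y) = R (m (R x) y + m x (R y) + d x y)) (x y : V) :
    R (prec m d R x y + succ m R x y) = m (R x) (R y) := by
  rw [hRB, prec, succ]
  abel_nf

theorem d_m_assoc
    (hc1 : ∀ x y z : V, d (m x y) z = m x (d y z))
    (hc2 : ∀ x y z : V, m x (d y z) = m (d x y) z)
    (hc3 : ∀ x y z : V, m (d x y) z = d x (m y z)) (x y z : V) :
    d (m x y) z = d x (m y z) := by
  rw [hc1, hc2, hc3]

theorem prec_prec
    (hm : ∀ x y z : V, m (m x y) z = m x (m y z))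
    (hd : ∀ x y z : V, d (d x y) z = d x (d y z))
    (hc1 : ∀ x y z : V, d (m x y) z = m x (d y z))
    (hc2 : ∀ x y z : V, m x (d y z) = m (d x y) z)
    (hc3 : ∀ x y z : V, m (d x y) z = d x (m y z))
    (hRB : ∀ x y : V, m (R x) (R y) = R (m (R x) y + m x (R y) + d x y)) (x y z : V) :
    prec m d R (prec m d R x y) z = prec m d R x (prec m d R y z + succ m R y z) := by
  conv_rhs => rw [prec, apply_prec_add_succ hRB]
  simp only [prec, succ, map_add, LinearMap.add_apply]
  rw [hm, hc3, d_m_assoc hc1 hc2 hc3, hd]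
  abel

theorem succ_prec
    (hm : ∀ x y z : V, m (m x y) z = m x (m y z))
    (hc1 : ∀ x y z : V, d (m x y) z = m x (d y z)) (x y z : V) :
    prec m d R (succ m R x y) z = succ m R x (prec m d R y z) := by
  simp only [prec, succ, map_add, hm, hc1]

theorem succ_succ
    (hm : ∀ x y z : V, m (m x y) z = m x (m y z))
    (hRB : ∀ x y : V, m (R x) (R y) = R (m (R x) y + m x (R y) + d x y)) (x y z : V) :
    succ m R x (succ m R y z) = succ m R (prec m d R x y + succ m R x y) z := by
  rw [succ, succ, succ, apply_prec_add_succ hRB, hm]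

end GeneralizedRotaBaxter

/-- A generalized Rota-Baxter algebra over an associative compatible pair
(m, d) gives a dendriform algebra via x≺y = xR(y) + x⋄y, x≻y = R(x)y. -/
theorem generalized_RotaBaxter_gives_dendriform
{K V : Type*} [Field K] [AddCommGroup V] [Module K V]
    (m d : V →ₗ[K] V →ₗ[K] V)
    (hm : ∀ x y z : V, m (m x y) z = m x (m y z))
    (hd : ∀ x y z : V, d (d x y) z = d x (d y z))
    (hc1 : ∀ x y z : V, d (m x y) z = m x (d y z))
    (hc2 : ∀ x y z : V, m x (d y z) = m (d x y) z)
    (hc3 : ∀ x y z : V, m (d x y) z = d x (m y z))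
    (R : V →ₗ[K] V)
    (hRB : ∀ x y : V, m (R x) (R y) = R (m (R x) y + m x (R y) + d x y)) :
    ∀ x y z : V,
      -- (x ≺ y) ≺ z = x ≺ (y ≺ z + y ≻ z)
      (m (m x (R y) + d x y) (R z) + d (m x (R y) + d x y) z
        = m x (R (m y (R z) + d y z + m (R y) z))
          + d x (m y (R z) + d y z + m (R y) z)) ∧
      -- (x ≻ y) ≺ z = x ≻ (y ≺ z)
      (m (m (R x) y) (R z) + d (m (R x) y) z = m (R x) (m y (R z) + d y z)) ∧
      -- x ≻ (y ≻ z) = (x ≺ y + x ≻ y) ≻ z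
      (m (R x) (m (R y) z) = m (R (m x (R y) + d x y + m (R x) y)) z) :=
  fun x y z =>
    ⟨GeneralizedRotaBaxter.prec_prec hm hd hc1 hc2 hc3 hRB x y z,
      GeneralizedRotaBaxter.succ_prec hm hc1 x y z,
      GeneralizedRotaBaxter.succ_succ hm hRB x y z⟩
end

section
/- Let (V, μ, ν, R) be a generalized Rota-Baxter algebra with (μ, ν) an associative compatible pair. Then x∘y = R(x)y − yR(x) + x⋄y defines a pre-Lie algebra structure on V. -/
/-!
Write `X = R x`, `Y = R y`. The Rota-Baxter identity says exactly that
`R (x ∘ y) = X Y - R (x Y) - R (y X)`, so `R (x ∘ y) - R (y ∘ x) = [X, Y]`. Expanding the associator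
`(x ∘ y) ∘ z - x ∘ (y ∘ z)` with this, the associativity of both products and the compatibility
identities, the terms that are not symmetric in `x` and `y` cancel, leaving an expression
that is visibly symmetric in `x` and `y`.
-/

section RotaBaxter

variable {K V : Type*} [CommSemiring K] [AddCommGroup V] [Module K V]

def rotaBaxterProduct (m d : V →ₗ[K] V →ₗ[K] V) (R : V →ₗ[K] V) (x y : V) : V :=
  m (R x) y - m y (R x) + d x y

variable {m d : V →ₗ[K] V →ₗ[K] V} {R : V →ₗ[K] V}

theorem map_rotaBaxterProduct
    (hRB : ∀ x y : V, m (R x) (R y) = R (m (R x) y + m x (R y) + d x y)) (x y : V) :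
    R (rotaBaxterProduct m d R x y) = m (R x) (R y) - R (m x (R y)) - R (m y (R x)) := by
  rw [rotaBaxterProduct, map_add, map_sub, hRB, map_add, map_add]
  abel

theorem rotaBaxterProduct_associator
    (hm : ∀ x y z : V, m (m x y) z = m x (m y z))
    (hd : ∀ x y z : V, d (d x y) z = d x (d y z))
    (hc1 : ∀ x y z : V, d (m x y) z = m x (d y z))
    (hc2 : ∀ x y z : V, m x (d y z) = m (d x y) z)
    (hc3 : ∀ x y z : V, m (d x y) z = d x (m y z))
    (hRB : ∀ x y : V, m (R x) (R y) = R (m (R x) y + m x (R y) + d x y)) (x y z : V) :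
    rotaBaxterProduct m d R (rotaBaxterProduct m d R x y) z
        - rotaBaxterProduct m d R x (rotaBaxterProduct m d R y z) =
      m (R x) (m z (R y)) + m (R y) (m z (R x)) - m z (m (R x) (R y)) - m z (m (R y) (R x))
        - m (R (m x (R y))) z - m (R (m y (R x))) z + m z (R (m x (R y))) + m z (R (m y (R x)))
        + d x (m z (R y)) + d y (m z (R x)) - d x (m (R y) z) - d y (m (R x) z) := by
  rw [rotaBaxterProduct, map_rotaBaxterProduct hRB]
  simp only [rotaBaxterProduct, map_add, map_sub, LinearMap.add_apply, LinearMap.sub_apply,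
    hm, hd, hc1, hc2, hc3]
  abel

end RotaBaxter

/-- A generalized Rota-Baxter algebra gives a pre-Lie algebra via
x∘y = R(x)y − yR(x) + x⋄y. -/
theorem generalized_RotaBaxter_gives_preLie
{K V : Type*} [Field K] [AddCommGroup V] [Module K V]
    (m d : V →ₗ[K] V →ₗ[K] V)
    (hm : ∀ x y z : V, m (m x y) z = m x (m y z))
    (hd : ∀ x y z : V, d (d x y) z = d x (d y z))
    (hc1 : ∀ x y z : V, d (m x y) z = m x (d y z))
    (hc2 : ∀ x y z : V, m x (d y z) = m (d x y) z)
    (hc3 : ∀ x y z : V, m (d x y) z = d x (m y z))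
    (R : V →ₗ[K] V)
    (hRB : ∀ x y : V, m (R x) (R y) = R (m (R x) y + m x (R y) + d x y))
    (p : V → V → V)
    (hp : ∀ x y : V, p x y = m (R x) y - m y (R x) + d x y) :
    ∀ x y z : V,
      p (p x y) z - p x (p y z) = p (p y x) z - p y (p x z) := by
  obtain rfl : p = rotaBaxterProduct m d R := funext fun x => funext (hp x)
  intro x y z
  rw [rotaBaxterProduct_associator hm hd hc1 hc2 hc3 hRB,
    rotaBaxterProduct_associator hm hd hc1 hc2 hc3 hRB]
  abel
end

section
/- Let (V, μ, ν, R) be a generalized Rota-Baxter algebra with (μ, ν) an associative compatible pair. Then x≺y = xR(y), x≻y = R(x)y, x·y = x⋄y define a tridendriform algebra structure on V. -/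
/-!
The two tridendriform axioms with `≺` or `≻` on both sides are the associativity of `μ`, read
through the identity `μ (R x) (R y) = R (μ (R x) y + μ x (R y) + ν x y)`. The axiom
`(x ≺ y) · z = x · (y ≻ z)` is `ν (μ x y) z = ν x (μ y z)` with `y := R y`, which the three
compatibility laws give for any middle factor; the other four axioms are instances of the
pair's associativity and compatibility laws.
-/

def IsGeneralizedRotaBaxter {V : Type*} [Add V] (μ ν : V → V → V) (R : V → V) : Prop :=
  ∀ x y : V, μ (R x) (R y) = R (μ (R x) y + μ x (R y) + ν x y)

namespace IsGeneralizedRotaBaxter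

variable {V : Type*} [AddCommMagma V] {μ ν : V → V → V} {R : V → V}

theorem mul_R_mul_R (hR : IsGeneralizedRotaBaxter μ ν R)
    (hμ : ∀ x y z : V, μ (μ x y) z = μ x (μ y z)) (x y z : V) :
    μ (μ x (R y)) (R z) = μ x (R (μ y (R z) + μ (R y) z + ν y z)) := by
  rw [hμ, hR, add_comm (μ (R y) z)]

theorem R_mul_R_mul (hR : IsGeneralizedRotaBaxter μ ν R)
    (hμ : ∀ x y z : V, μ (μ x y) z = μ x (μ y z)) (x y z : V) :
    μ (R x) (μ (R y) z) = μ (R (μ x (R y) + μ (R x) y + ν x y)) z := by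
  rw [← hμ, hR, add_comm (μ x (R y))]

end IsGeneralizedRotaBaxter

theorem compatible_mul_diamond_assoc {V : Type*} {μ ν : V → V → V}
    (hc1 : ∀ x y z : V, ν (μ x y) z = μ x (ν y z))
    (hc2 : ∀ x y z : V, μ x (ν y z) = μ (ν x y) z)
    (hc3 : ∀ x y z : V, μ (ν x y) z = ν x (μ y z)) (x y z : V) :
    ν (μ x y) z = ν x (μ y z) := by
  rw [hc1, hc2, hc3]

/-- A generalized Rota-Baxter algebra gives a tridendriform algebra via
x≺y = xR(y), x≻y = R(x)y, x·y = x⋄y. -/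
theorem generalized_RotaBaxter_gives_tridendriform
{K V : Type*} [Field K] [AddCommGroup V] [Module K V]
    (m d : V →ₗ[K] V →ₗ[K] V)
    (hm : ∀ x y z : V, m (m x y) z = m x (m y z))
    (hd : ∀ x y z : V, d (d x y) z = d x (d y z))
    (hc1 : ∀ x y z : V, d (m x y) z = m x (d y z))
    (hc2 : ∀ x y z : V, m x (d y z) = m (d x y) z)
    (hc3 : ∀ x y z : V, m (d x y) z = d x (m y z))
    (R : V →ₗ[K] V)
    (hRB : ∀ x y : V, m (R x) (R y) = R (m (R x) y + m x (R y) + d x y)) :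
    ∀ x y z : V,
      -- (x ≺ y) ≺ z = x ≺ (y ≺ z + y ≻ z + y · z)
      (m (m x (R y)) (R z) = m x (R (m y (R z) + m (R y) z + d y z))) ∧
      -- (x ≻ y) ≺ z = x ≻ (y ≺ z)
      (m (m (R x) y) (R z) = m (R x) (m y (R z))) ∧
      -- x ≻ (y ≻ z) = (x ≺ y + x ≻ y + x · y) ≻ z
      (m (R x) (m (R y) z) = m (R (m x (R y) + m (R x) y + d x y)) z) ∧
      -- (x ≻ y) · z = x ≻ (y · z)
      (d (m (R x) y) z = m (R x) (d y z)) ∧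
      -- (x ≺ y) · z = x · (y ≻ z)
      (d (m x (R y)) z = d x (m (R y) z)) ∧
      -- (x · y) ≺ z = x · (y ≺ z)
      (m (d x y) (R z) = d x (m y (R z))) ∧
      -- (x · y) · z = x · (y · z)
      (d (d x y) z = d x (d y z)) := by
  have hR : IsGeneralizedRotaBaxter (fun a b => m a b) (fun a b => d a b) R := hRB
  intro x y z
  exact ⟨hR.mul_R_mul_R hm x y z, hm _ _ _, hR.R_mul_R_mul hm x y z, hc1 _ _ _,
    compatible_mul_diamond_assoc hc1 hc2 hc3 x (R y) z, hc3 _ _ _, hd _ _ _⟩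
end

section
/- Let (V, μ, ν, R) be a generalized Rota-Baxter algebra with (μ, ν) an associative compatible pair. Then x∗y = R(x)y + xR(y) + x⋄y defines an associative product on V. -/
/-!
Since `R` is multiplicative from `∗` to `·`, i.e. `R (x ∗ y) = R x · R y`, both `(x ∗ y) ∗ z` and
`x ∗ (y ∗ z)` expand into the same seven monomials in `·` and `⋄`, once each product is
re-bracketed to the right with the compatibility identities.
-/

namespace GeneralizedRotaBaxter

variable {S V : Type*} [CommSemiring S] [AddCommMonoid V] [Module S V]

/-- `(m, d)` is an associative compatible pair, with `m x y = xy` and `d x y = x ⋄ y`. -/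
structure IsAssocCompatiblePair (m d : V →ₗ[S] V →ₗ[S] V) : Prop where
  m_assoc : ∀ x y z, m (m x y) z = m x (m y z)
  d_assoc : ∀ x y z, d (d x y) z = d x (d y z)
  d_m_eq_m_d : ∀ x y z, d (m x y) z = m x (d y z)
  m_d_eq_m_d : ∀ x y z, m x (d y z) = m (d x y) z
  m_d_eq_d_m : ∀ x y z, m (d x y) z = d x (m y z)

namespace IsAssocCompatiblePair

variable {m d : V →ₗ[S] V →ₗ[S] V}

theorem m_d_right_eq_d_m (h : IsAssocCompatiblePair m d) (x y z : V) :
    m x (d y z) = d x (m y z) := by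
  rw [h.m_d_eq_m_d, h.m_d_eq_d_m]

theorem d_m_eq_d_m (h : IsAssocCompatiblePair m d) (x y z : V) :
    d (m x y) z = d x (m y z) := by
  rw [h.d_m_eq_m_d, h.m_d_right_eq_d_m]

end IsAssocCompatiblePair

def mul (m d : V →ₗ[S] V →ₗ[S] V) (R : V →ₗ[S] V) (x y : V) : V :=
  m (R x) y + m x (R y) + d x y

theorem mul_assoc {m d : V →ₗ[S] V →ₗ[S] V} (h : IsAssocCompatiblePair m d) {R : V →ₗ[S] V}
    (hR : ∀ x y, m (R x) (R y) = R (mul m d R x y)) (x y z : V) :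
    mul m d R (mul m d R x y) z = mul m d R x (mul m d R y z) := by
  rw [mul, ← hR, mul, mul, ← hR, mul]
  simp only [map_add, LinearMap.add_apply, h.m_assoc, h.d_assoc, h.d_m_eq_d_m,
    h.m_d_eq_d_m, h.m_d_right_eq_d_m]
  abel

end GeneralizedRotaBaxter

open GeneralizedRotaBaxter in
/-- A generalized Rota-Baxter algebra gives an associative product
x∗y = R(x)y + xR(y) + x⋄y. -/
theorem generalized_RotaBaxter_gives_associative
{K V : Type*} [Field K] [AddCommGroup V] [Module K V]
    (m d : V →ₗ[K] V →ₗ[K] V)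
    (hm : ∀ x y z : V, m (m x y) z = m x (m y z))
    (hd : ∀ x y z : V, d (d x y) z = d x (d y z))
    (hc1 : ∀ x y z : V, d (m x y) z = m x (d y z))
    (hc2 : ∀ x y z : V, m x (d y z) = m (d x y) z)
    (hc3 : ∀ x y z : V, m (d x y) z = d x (m y z))
    (R : V →ₗ[K] V)
    (hRB : ∀ x y : V, m (R x) (R y) = R (m (R x) y + m x (R y) + d x y))
    (ast : V → V → V)
    (hast : ∀ x y : V, ast x y = m (R x) y + m x (R y) + d x y) :
    ∀ x y z : V, ast (ast x y) z = ast x (ast y z) := by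
  have hast' : ast = mul m d R := funext₂ hast
  subst hast'
  exact mul_assoc ⟨hm, hd, hc1, hc2, hc3⟩ hRB
end

section
/- Let (A, R, S, ω₁, ω₂) be a double curved Rota-Baxter system. Define a∗b = R(a)b + aS(b). Then (A, ∗) is associative if and only if ω₁(a⊗b)c = aω₂(b⊗c) for all a,b,c∈A. -/
namespace DoubleCurvedRotaBaxter

variable {A : Type*} [NonUnitalRing A]

def starMul (R S : A → A) (a b : A) : A := R a * b + a * S b

/-- Expanding both bracketings with the curved Rota-Baxter identities, the terms `R a R b c`,
`R a b S c` and `a S b S c` cancel and only the curvature terms survive. -/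
theorem starMul_assoc_sub {R S : A → A} {w1 w2 : A → A → A} {a b c : A}
    (hR : R a * R b = R (R a * b + a * S b) + w1 a b)
    (hS : S b * S c = S (R b * c + b * S c) + w2 b c) :
    starMul R S (starMul R S a b) c - starMul R S a (starMul R S b c) =
      a * w2 b c - w1 a b * c := by
  rw [starMul, starMul, starMul, starMul, eq_sub_of_add_eq' hR.symm, eq_sub_of_add_eq' hS.symm]
  noncomm_ring

theorem starMul_assoc_iff {R S : A → A} {w1 w2 : A → A → A}
    (hR : ∀ a b, R a * R b = R (R a * b + a * S b) + w1 a b)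
    (hS : ∀ a b, S a * S b = S (R a * b + a * S b) + w2 a b) :
    (∀ a b c, starMul R S (starMul R S a b) c = starMul R S a (starMul R S b c)) ↔
      ∀ a b c, w1 a b * c = a * w2 b c := by
  refine forall₃_congr fun a b c => ?_
  rw [← sub_eq_zero, starMul_assoc_sub (hR a b) (hS b c), sub_eq_zero, eq_comm]

end DoubleCurvedRotaBaxter

/-- For a double curved Rota-Baxter system, a∗b = R(a)b + aS(b) is associative
iff ω₁(a⊗b)c = aω₂(b⊗c). -/
theorem doubleCurved_RotaBaxter_ast_assoc_iff
{K A : Type*} [Field K] [Ring A] [Algebra K A]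
    (R S : A →ₗ[K] A) (w1 w2 : A →ₗ[K] A →ₗ[K] A)
    (hR : ∀ a b : A, R a * R b = R (R a * b + a * S b) + w1 a b)
    (hS : ∀ a b : A, S a * S b = S (R a * b + a * S b) + w2 a b)
    (ast : A → A → A)
    (hast : ∀ a b : A, ast a b = R a * b + a * S b) :
    (∀ a b c : A, ast (ast a b) c = ast a (ast b c)) ↔
      (∀ a b c : A, w1 a b * c = a * w2 b c) := by
  obtain rfl : ast = DoubleCurvedRotaBaxter.starMul R S := funext₂ hast
  exact DoubleCurvedRotaBaxter.starMul_assoc_iff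
    (w1 := fun a b => w1 a b) (w2 := fun a b => w2 a b) hR hS
end

section
/- Let T: A⊗A→A⊗A be a double curved weak pseudotwistor with weak companion 𝒯 and curvatures ω₁, ω₂ on an associative algebra (A, μ). Then μ∘T is an associative product on A. -/
open TensorProduct

theorem LinearMap.mul'_comp_rTensor_mul'_comp_assoc_symm {R A : Type*} [CommSemiring R]
    [NonUnitalSemiring A] [Module R A] [SMulCommClass R A A] [IsScalarTower R A A] :
    mul' R A ∘ₗ rTensor A (mul' R A) ∘ₗ (TensorProduct.assoc R A A A).symm.toLinearMap
      = mul' R A ∘ₗ lTensor A (mul' R A) :=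
  TensorProduct.ext_threefold' fun a b c => by simp [mul_assoc]

/-- A double curved weak pseudotwistor T with weak companion Tt and curvatures
w1, w2 makes μ∘T an associative product on A. -/
theorem doubleCurved_weakPseudotwistor_gives_associative
    {K A : Type*} [Field K] [Ring A] [Algebra K A]
    (T : A ⊗[K] A →ₗ[K] A ⊗[K] A)
    (Tt : A ⊗[K] (A ⊗[K] A) →ₗ[K] A ⊗[K] (A ⊗[K] A))
    (w1 w2 : A ⊗[K] A →ₗ[K] A)
    -- T ∘ (id ⊗ (μ∘T)) = (id ⊗ μ) ∘ Tt − id ⊗ w2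
    (h1 : T ∘ₗ LinearMap.lTensor A (LinearMap.mul' K A ∘ₗ T)
        = LinearMap.lTensor A (LinearMap.mul' K A) ∘ₗ Tt
          - LinearMap.lTensor A w2)
    -- T ∘ ((μ∘T) ⊗ id) = (μ ⊗ id) ∘ Tt − w1 ⊗ id
    (h2 : T ∘ₗ (LinearMap.rTensor A (LinearMap.mul' K A ∘ₗ T)
            ∘ₗ (TensorProduct.assoc K A A A).symm.toLinearMap)
        = (LinearMap.rTensor A (LinearMap.mul' K A)
            ∘ₗ (TensorProduct.assoc K A A A).symm.toLinearMap) ∘ₗ Tt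
          - LinearMap.rTensor A w1
            ∘ₗ (TensorProduct.assoc K A A A).symm.toLinearMap)
    -- μ ∘ (w1 ⊗ id) = μ ∘ (id ⊗ w2)
    (h3 : LinearMap.mul' K A ∘ₗ (LinearMap.rTensor A w1
            ∘ₗ (TensorProduct.assoc K A A A).symm.toLinearMap)
        = LinearMap.mul' K A ∘ₗ LinearMap.lTensor A w2) :
    ∀ a b c : A,
      LinearMap.mul' K A (T ((LinearMap.mul' K A (T (a ⊗ₜ[K] b))) ⊗ₜ[K] c))
        = LinearMap.mul' K A (T (a ⊗ₜ[K] LinearMap.mul' K A (T (b ⊗ₜ[K] c)))) := by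
  have h : LinearMap.mul' K A ∘ₗ T ∘ₗ LinearMap.rTensor A (LinearMap.mul' K A ∘ₗ T)
        ∘ₗ (TensorProduct.assoc K A A A).symm.toLinearMap
      = LinearMap.mul' K A ∘ₗ T ∘ₗ LinearMap.lTensor A (LinearMap.mul' K A ∘ₗ T) := by
    -- after composing with μ, the companion terms agree by associativity of μ, the curvatures by h3
    rw [h2, h1, LinearMap.comp_sub, LinearMap.comp_sub, h3, ← LinearMap.comp_assoc,
      LinearMap.mul'_comp_rTensor_mul'_comp_assoc_symm, LinearMap.comp_assoc]
  intro a b c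
  simpa using LinearMap.congr_fun h (a ⊗ₜ[K] (b ⊗ₜ[K] c))
end

section
/- Let (A, R, S, ω₁, ω₂) be a double curved Rota-Baxter system whose curvatures satisfy ω₁(a⊗b)c = aω₂(b⊗c). Define T(a⊗b) = R(a)⊗b + a⊗S(b) and 𝒯(a⊗b⊗c) = R(a)⊗R(b)⊗c + R(a)⊗b⊗S(c) + a⊗S(b)⊗S(c). Then T is a double curved weak pseudotwistor with weak companion 𝒯 and curvatures ω₁, ω₂. -/
/-!
On a pure tensor `a ⊗ b ⊗ c`, the two sides of the first twisting identity differ by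
`a ⊗ (S b * S c - S (R b * c + b * S c) - w₂ (b ⊗ c))`, which vanishes by the curved Rota–Baxter
identity for `S`; symmetrically, the second differs by the curved Rota–Baxter identity for `R`,
tensored with `c`.
-/

open TensorProduct

namespace RotaBaxterSystem

variable {K A : Type*} [CommSemiring K] [Ring A] [Algebra K A]

variable (R S : A →ₗ[K] A)

def twist : A ⊗[K] A →ₗ[K] A ⊗[K] A :=
  map R LinearMap.id + map LinearMap.id S

def companion : A ⊗[K] (A ⊗[K] A) →ₗ[K] A ⊗[K] (A ⊗[K] A) :=
  map R (map R LinearMap.id) + map R (map LinearMap.id S) + map LinearMap.id (map S S)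

@[simp]
theorem twist_tmul (a b : A) : twist R S (a ⊗ₜ b) = R a ⊗ₜ b + a ⊗ₜ S b := by
  simp [twist]

@[simp]
theorem companion_tmul (a b c : A) :
    companion R S (a ⊗ₜ (b ⊗ₜ c)) =
      R a ⊗ₜ (R b ⊗ₜ c) + R a ⊗ₜ (b ⊗ₜ S c) + a ⊗ₜ (S b ⊗ₜ S c) := by
  simp [companion]

variable {R S}

theorem twist_comp_lTensor_mul'_twist {w₂ : A ⊗[K] A →ₗ[K] A}
    (hS : ∀ a b : A, S a * S b = S (R a * b + a * S b) + w₂ (a ⊗ₜ b)) :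
    twist R S ∘ₗ (LinearMap.mul' K A ∘ₗ twist R S).lTensor A =
      (LinearMap.mul' K A).lTensor A ∘ₗ companion R S - w₂.lTensor A := by
  ext a b c
  have hSbc := congrArg (a ⊗ₜ[K] ·) (hS b c)
  simp only [AlgebraTensorModule.curry_apply, curry_apply, LinearMap.coe_restrictScalars,
    LinearMap.comp_apply, LinearMap.sub_apply, LinearMap.lTensor_tmul, twist_tmul,
    companion_tmul, LinearMap.mul'_apply, map_add, tmul_add] at hSbc ⊢
  linear_combination (norm := abel) -hSbc

theorem twist_comp_rTensor_mul'_twist {w₁ : A ⊗[K] A →ₗ[K] A}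
    (hR : ∀ a b : A, R a * R b = R (R a * b + a * S b) + w₁ (a ⊗ₜ b)) :
    twist R S ∘ₗ (LinearMap.mul' K A ∘ₗ twist R S).rTensor A ∘ₗ
        (TensorProduct.assoc K A A A).symm.toLinearMap =
      ((LinearMap.mul' K A).rTensor A ∘ₗ (TensorProduct.assoc K A A A).symm.toLinearMap) ∘ₗ
          companion R S -
        w₁.rTensor A ∘ₗ (TensorProduct.assoc K A A A).symm.toLinearMap := by
  ext a b c
  have hRab := congrArg (· ⊗ₜ[K] c) (hR a b)
  simp only [AlgebraTensorModule.curry_apply, curry_apply, LinearMap.coe_restrictScalars,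
    LinearMap.comp_apply, LinearMap.sub_apply, LinearEquiv.coe_coe, assoc_symm_tmul,
    LinearMap.rTensor_tmul, twist_tmul, companion_tmul, LinearMap.mul'_apply, map_add,
    add_tmul] at hRab ⊢
  linear_combination (norm := abel) -hRab

theorem mul'_comp_rTensor_eq_mul'_comp_lTensor {w₁ w₂ : A ⊗[K] A →ₗ[K] A}
    (hw : ∀ a b c : A, w₁ (a ⊗ₜ b) * c = a * w₂ (b ⊗ₜ c)) :
    LinearMap.mul' K A ∘ₗ w₁.rTensor A ∘ₗ (TensorProduct.assoc K A A A).symm.toLinearMap =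
      LinearMap.mul' K A ∘ₗ w₂.lTensor A := by
  ext a b c
  simp [hw]

end RotaBaxterSystem

open RotaBaxterSystem in
/-- For a double curved Rota-Baxter system with ω₁(a⊗b)c = aω₂(b⊗c),
T(a⊗b) = R(a)⊗b + a⊗S(b) is a double curved weak pseudotwistor with weak
companion Tt(a⊗b⊗c) = R(a)⊗R(b)⊗c + R(a)⊗b⊗S(c) + a⊗S(b)⊗S(c) and
curvatures ω₁, ω₂. -/
theorem doubleCurved_RotaBaxter_gives_weakPseudotwistor
    {K A : Type*} [Field K] [Ring A] [Algebra K A]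
    (R S : A →ₗ[K] A) (w1 w2 : A ⊗[K] A →ₗ[K] A)
    (hR : ∀ a b : A, R a * R b = R (R a * b + a * S b) + w1 (a ⊗ₜ[K] b))
    (hS : ∀ a b : A, S a * S b = S (R a * b + a * S b) + w2 (a ⊗ₜ[K] b))
    (hw : ∀ a b c : A, w1 (a ⊗ₜ[K] b) * c = a * w2 (b ⊗ₜ[K] c))
    (T : A ⊗[K] A →ₗ[K] A ⊗[K] A)
    (hT : T = TensorProduct.map R LinearMap.id + TensorProduct.map LinearMap.id S)
    (Tt : A ⊗[K] (A ⊗[K] A) →ₗ[K] A ⊗[K] (A ⊗[K] A))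
    (hTt : Tt = TensorProduct.map R (TensorProduct.map R LinearMap.id)
        + TensorProduct.map R (TensorProduct.map LinearMap.id S)
        + TensorProduct.map LinearMap.id (TensorProduct.map S S)) :
    -- T ∘ (id ⊗ (μ∘T)) = (id ⊗ μ) ∘ Tt − id ⊗ w2
    (T ∘ₗ LinearMap.lTensor A (LinearMap.mul' K A ∘ₗ T)
        = LinearMap.lTensor A (LinearMap.mul' K A) ∘ₗ Tt
          - LinearMap.lTensor A w2) ∧
    -- T ∘ ((μ∘T) ⊗ id) = (μ ⊗ id) ∘ Tt − w1 ⊗ id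
    (T ∘ₗ (LinearMap.rTensor A (LinearMap.mul' K A ∘ₗ T)
            ∘ₗ (TensorProduct.assoc K A A A).symm.toLinearMap)
        = (LinearMap.rTensor A (LinearMap.mul' K A)
            ∘ₗ (TensorProduct.assoc K A A A).symm.toLinearMap) ∘ₗ Tt
          - LinearMap.rTensor A w1
            ∘ₗ (TensorProduct.assoc K A A A).symm.toLinearMap) ∧
    -- μ ∘ (w1 ⊗ id) = μ ∘ (id ⊗ w2)
    (LinearMap.mul' K A ∘ₗ (LinearMap.rTensor A w1
            ∘ₗ (TensorProduct.assoc K A A A).symm.toLinearMap)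
        = LinearMap.mul' K A ∘ₗ LinearMap.lTensor A w2) := by
  obtain rfl : T = twist R S := hT
  obtain rfl : Tt = companion R S := hTt
  exact ⟨twist_comp_lTensor_mul'_twist hS, twist_comp_rTensor_mul'_twist hR,
    mul'_comp_rTensor_eq_mul'_comp_lTensor hw⟩
end

section
/- Let A be an algebra with unit 1, R: A→A a linear map, and define ω(a⊗b) = −aR(1)b. If (A, A, R, R, ω) is a curved O-operator system associated to the regular bimodule (A, L, R) (i.e. R(a)R(b) = R(R(a)b + aR(b) − aR(1)b) for all a,b), then a∗b = R(a)b + aR(b) − aR(1)b defines an associative product on A. -/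
/-!
Write `u = R 1` and `a ⋆ b = R a * b + a * R b - a * u * b`. The TD identity says
`R (a ⋆ b) = R a * R b`, which already makes the two bracketings of `a ⋆ b ⋆ c` agree
up to the terms `a * R b * u * c` and `a * u * R b * c`. These coincide because `u`
commutes with every `R b`: both `u * R b` and `R b * u` equal `R (R b)` by the TD identity
with one argument equal to `1`.
-/

namespace TDOperator

variable {A : Type*} [Ring A]

def tdMul (R : A → A) (a b : A) : A := R a * b + a * R b - a * R 1 * b

def IsTDOperator (R : A → A) : Prop := ∀ a b : A, R a * R b = R (tdMul R a b)

variable {R : A → A}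

theorem IsTDOperator.commute_map_one (hR : IsTDOperator R) (b : A) : Commute (R 1) (R b) := by
  have left : R 1 * R b = R (R b) := by
    rw [hR, tdMul]
    congr 1
    noncomm_ring
  have right : R b * R 1 = R (R b) := by
    rw [hR, tdMul]
    congr 1
    noncomm_ring
  exact left.trans right.symm

theorem IsTDOperator.tdMul_assoc (hR : IsTDOperator R) (a b c : A) :
    tdMul R (tdMul R a b) c = tdMul R a (tdMul R b c) := by
  have hcomm : ∀ x : A, R 1 * (R b * x) = R b * (R 1 * x) := (hR.commute_map_one b).left_comm
  have hab := (hR a b).symm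
  have hbc := (hR b c).symm
  simp only [tdMul] at hab hbc ⊢
  rw [hab, hbc]
  noncomm_ring [hcomm]

end TDOperator

/-- A TD-operator R (curved O-operator system with ω(a⊗b) = −aR(1)b) induces
the associative product a∗b = R(a)b + aR(b) − aR(1)b. -/
theorem TD_operator_gives_associative
    {K A : Type*} [Field K] [Ring A] [Algebra K A]
    (R : A →ₗ[K] A)
    (hR : ∀ a b : A, R a * R b = R (R a * b + a * R b - a * R 1 * b))
    (ast : A → A → A)
    (hast : ∀ a b : A, ast a b = R a * b + a * R b - a * R 1 * b) :
    ∀ a b c : A, ast (ast a b) c = ast a (ast b c) := by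
  obtain rfl : ast = TDOperator.tdMul R := funext₂ hast
  exact TDOperator.IsTDOperator.tdMul_assoc hR
end
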